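/- Let 0<q<1 and k>0, and let f be a function on (0,∞) satisfying 1/f(x+1) = [x]_q^k f(x) for all x>0 and f(1)=1. If f is convex for all x>M for some M≥0, then f(x) = G_q(x)^k for all x>0. -/

import Mathlib

open Real Set

/-- The infinite q-Pochhammer symbol `(a;q)_∞ = ∏_{k≥0} (1 - a q^k)`. -/
noncomputable def qPochInf (a q : ℝ) : ℝ := ∏' k : ℕ, (1 - a * q ^ k)

/-- Jackson's q-gamma function for `0 < q < 1`. -/
noncomputable def qGamma (q x : ℝ) : ℝ :=
  qPochInf q q / qPochInf (q ^ x) q * (1 - q) ^ (1 - x)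

/-- The q-number `[x]_q = (1 - q^x)/(1 - q)`. -/
noncomputable def qBracket (q x : ℝ) : ℝ := (1 - q ^ x) / (1 - q)

/-- `G_q(x) = Γ_{q²}(x/2) / (√([2]_q) Γ_{q²}((x+1)/2))`, where `[2]_q = 1 + q`. -/
noncomputable def qG (q x : ℝ) : ℝ :=
  qGamma (q ^ 2) (x / 2) / (Real.sqrt (1 + q) * qGamma (q ^ 2) ((x + 1) / 2))

/-!
Both `f` and `G_q^k` satisfy `h(x + 1) = ([x]_q^k h(x))⁻¹`, and the sign of `f` propagates along
`x + ℕ`; since `f(n) > 0` at integers, convexity rules out `f ≤ 0` anywhere beyond `M`.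
There `g = f / G_q^k` satisfies `g(x) g(x + 1) = 1`, so `g` is 2-periodic, and since
`G_q(x) → √(1 - q)` we get `f(x + 2n) → g(x) (1 - q)^(k/2)`. Convexity gives
`f(x + 1 + 2n) ≤ max (f(x + 2n)) (f(x + 2n + 2))`, hence `g(x + 1) ≤ g(x)` and symmetrically
`g(x) ≤ g(x + 1)`; thus `g(x)² = 1` and `g = 1` beyond `M`. The functional equation then carries
`f = G_q^k` down to all `x > 0`.
-/

open Filter Topology

section qPochInf

variable {a Q : ℝ}

lemma qPochInf_eq_tprod_one_add (a Q : ℝ) :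
    qPochInf a Q = ∏' j : ℕ, (1 + -(a * Q ^ j)) := by
  simp only [qPochInf, sub_eq_add_neg]

lemma summable_norm_neg_mul_pow (a : ℝ) (hQ : |Q| < 1) :
    Summable fun j : ℕ => ‖-(a * Q ^ j)‖ := by
  simpa only [norm_neg, norm_mul, norm_pow, Real.norm_eq_abs] using
    (summable_geometric_of_lt_one (abs_nonneg Q) hQ).mul_left |a|

lemma qPochInf_pos (ha : a < 1) (hQ0 : 0 ≤ Q) (hQ1 : Q < 1) : 0 < qPochInf a Q := by
  have hfac : ∀ j : ℕ, 0 < 1 + -(a * Q ^ j) := fun j => by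
    have := pow_le_one₀ hQ0 hQ1.le (n := j)
    have := pow_nonneg hQ0 j
    rcases le_or_gt 0 a with h | h <;> nlinarith
  have hsum := Real.summable_log_one_add_of_summable
    (summable_norm_neg_mul_pow a (abs_lt.2 ⟨by linarith, hQ1⟩)).of_norm
  rw [qPochInf_eq_tprod_one_add, ← Real.rexp_tsum_eq_tprod hfac hsum]
  exact exp_pos _

lemma qPochInf_eq_one_sub_mul (hQ : |Q| < 1) : qPochInf a Q = (1 - a) * qPochInf (a * Q) Q := by
  have hmul : Multipliable fun j : ℕ => 1 + -(a * Q * Q ^ j) :=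
    multipliable_one_add_of_summable (R := ℝ) (summable_norm_neg_mul_pow (a * Q) hQ)
  rw [qPochInf_eq_tprod_one_add, qPochInf_eq_tprod_one_add, tprod_eq_zero_mul']
  · simp only [pow_zero, mul_one, pow_succ, ← mul_assoc, mul_right_comm a, sub_eq_add_neg]
  · simpa only [pow_succ, ← mul_assoc, mul_right_comm a] using hmul

lemma tendsto_qPochInf_nhds_zero (hQ : |Q| < 1) :
    Tendsto (fun a => qPochInf a Q) (𝓝 0) (𝓝 1) := by
  have hbound : ∀ᶠ a in 𝓝 (0 : ℝ), ∀ j : ℕ, ‖-(a * Q ^ j)‖ ≤ ‖-(1 * Q ^ j)‖ := by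
    filter_upwards [Metric.closedBall_mem_nhds (0 : ℝ) one_pos] with a ha j
    rw [Metric.mem_closedBall, dist_zero_right] at ha
    simp only [norm_neg, norm_mul, norm_one]
    exact mul_le_mul_of_nonneg_right ha (norm_nonneg _)
  have h := tendsto_tprod_one_add_of_dominated_convergence (g := fun _ : ℕ => 0)
    (summable_norm_neg_mul_pow 1 hQ)
    (fun j => (by fun_prop : Continuous fun a : ℝ => -(a * Q ^ j)).tendsto' 0 0 (by simp))
    hbound
  simpa only [add_zero, tprod_one, ← qPochInf_eq_tprod_one_add] using h

end qPochInf

section qG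

variable {q : ℝ}

lemma abs_sq_lt_one (hq0 : 0 < q) (hq1 : q < 1) : |q ^ 2| < 1 := by
  rw [abs_of_pos (by positivity)]
  nlinarith

lemma qPochInf_rpow_sq_pos (hq0 : 0 < q) (hq1 : q < 1) {x : ℝ} (hx : 0 < x) :
    0 < qPochInf (q ^ x) (q ^ 2) :=
  qPochInf_pos (rpow_lt_one hq0.le hq1 hx) (by positivity) (by nlinarith)

lemma qBracket_pos (hq0 : 0 < q) (hq1 : q < 1) {x : ℝ} (hx : 0 < x) : 0 < qBracket q x :=
  div_pos (sub_pos.2 (rpow_lt_one hq0.le hq1 hx)) (sub_pos.2 hq1)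

lemma qG_eq (hq0 : 0 < q) (hq1 : q < 1) {x : ℝ} (hx : 0 < x) :
    qG q x = √(1 - q) * (qPochInf (q ^ (x + 1)) (q ^ 2) / qPochInf (q ^ x) (q ^ 2)) := by
  have hbase : ∀ y : ℝ, (q ^ 2) ^ (y / 2) = q ^ y := fun y => by
    rw [← rpow_natCast, ← rpow_mul hq0.le]; push_cast; ring_nf
  have h1q2 : 0 < 1 - q ^ 2 := by nlinarith
  have hexp : (1 - q ^ 2) ^ (1 - x / 2) =
      (1 - q ^ 2) ^ (1 - (x + 1) / 2) * (√(1 - q) * √(1 + q)) := by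
    rw [show 1 - x / 2 = (1 - (x + 1) / 2) + 1 / 2 by ring, rpow_add h1q2,
      ← sqrt_mul (by linarith), ← sqrt_eq_rpow]
    ring_nf
  have := qPochInf_pos (a := q ^ 2) (Q := q ^ 2) (by nlinarith) (by positivity) (by nlinarith)
  have := qPochInf_rpow_sq_pos hq0 hq1 hx
  have := qPochInf_rpow_sq_pos hq0 hq1 (by linarith : 0 < x + 1)
  have := rpow_pos_of_pos h1q2 (1 - (x + 1) / 2)
  have := sqrt_pos.2 (by linarith : 0 < 1 + q)
  rw [qG, qGamma, qGamma, hbase, hbase, hexp]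
  field_simp

lemma qG_pos (hq0 : 0 < q) (hq1 : q < 1) {x : ℝ} (hx : 0 < x) : 0 < qG q x := by
  rw [qG_eq hq0 hq1 hx]
  exact mul_pos (sqrt_pos.2 (by linarith))
    (div_pos (qPochInf_rpow_sq_pos hq0 hq1 (by linarith)) (qPochInf_rpow_sq_pos hq0 hq1 hx))

lemma qG_add_one (hq0 : 0 < q) (hq1 : q < 1) {x : ℝ} (hx : 0 < x) :
    qG q (x + 1) = (qBracket q x * qG q x)⁻¹ := by
  refine eq_inv_of_mul_eq_one_right ?_
  have hshift : qPochInf (q ^ x) (q ^ 2) = (1 - q ^ x) * qPochInf (q ^ (x + 2)) (q ^ 2) := by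
    rw [qPochInf_eq_one_sub_mul (abs_sq_lt_one hq0 hq1), rpow_add hq0, ← rpow_natCast]
    norm_num
  have := qPochInf_rpow_sq_pos hq0 hq1 (by linarith : 0 < x + 1)
  have := qPochInf_rpow_sq_pos hq0 hq1 (by linarith : 0 < x + 2)
  have := sub_pos.2 (rpow_lt_one hq0.le hq1 hx)
  have h1q : 1 - q ≠ 0 := (sub_pos.2 hq1).ne'
  rw [qG_eq hq0 hq1 hx, qG_eq hq0 hq1 (by linarith), qBracket, hshift, add_assoc,
    one_add_one_eq_two]
  field_simp
  rw [sq_sqrt (sub_pos.2 hq1).le]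

lemma qG_rpow_add_one (hq0 : 0 < q) (hq1 : q < 1) (k : ℝ) {x : ℝ} (hx : 0 < x) :
    qG q (x + 1) ^ k = (qBracket q x ^ k * qG q x ^ k)⁻¹ := by
  have hb := qBracket_pos hq0 hq1 hx
  have hG := qG_pos hq0 hq1 hx
  rw [qG_add_one hq0 hq1 hx, inv_rpow (by positivity), mul_rpow hb.le hG.le]

lemma tendsto_qG_atTop (hq0 : 0 < q) (hq1 : q < 1) : Tendsto (qG q) atTop (𝓝 √(1 - q)) := by
  have hP (c : ℝ) : Tendsto (fun x : ℝ => qPochInf (q ^ (x + c)) (q ^ 2)) atTop (𝓝 1) :=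
    (tendsto_qPochInf_nhds_zero (abs_sq_lt_one hq0 hq1)).comp
      ((tendsto_rpow_atTop_of_base_lt_one q (by linarith) hq1).comp
        (tendsto_atTop_add_const_right _ c tendsto_id))
  have h := ((hP 1).div (hP 0) one_ne_zero).const_mul √(1 - q)
  rw [div_one, mul_one] at h
  refine h.congr' ?_
  filter_upwards [eventually_gt_atTop 0] with x hx
  simp only [Pi.div_apply, add_zero, qG_eq hq0 hq1 hx]

end qG

section Uniqueness

variable {f h : ℝ → ℝ} {M : ℝ}

lemma ConvexOn.le_of_tendsto_add_two_mul (hconv : ConvexOn ℝ (Ioi M) f) {x A B : ℝ} (hx : M < x)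
    (hA : Tendsto (fun n : ℕ => f (x + 2 * n)) atTop (𝓝 A))
    (hB : Tendsto (fun n : ℕ => f (x + 1 + 2 * n)) atTop (𝓝 B)) : B ≤ A := by
  have hA' : Tendsto (fun n : ℕ => max (f (x + 2 * n)) (f (x + 2 * n + 2))) atTop (𝓝 A) := by
    have h := hA.max (hA.comp (tendsto_add_atTop_nat 1))
    rw [max_self] at h
    refine h.congr fun n => ?_
    simp only [Function.comp_apply, Nat.cast_add, Nat.cast_one, mul_add, mul_one, add_assoc]
  refine le_of_tendsto_of_tendsto' hB hA' fun n => ?_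
  have hn : M < x + 2 * n := by linarith [n.cast_nonneg (α := ℝ)]
  refine hconv.le_on_segment hn (show M < x + 2 * n + 2 by linarith) ?_
  rw [segment_eq_Icc (by linarith)]
  constructor <;> linarith

lemma pos_of_convexOn_of_pos_add_one_iff (hM : 0 ≤ M) (hconv : ConvexOn ℝ (Ioi M) f)
    (hsign : ∀ x > 0, 0 < f (x + 1) ↔ 0 < f x) (h1 : 0 < f 1) : ∀ x > M, 0 < f x := by
  have hsign_nat : ∀ x > 0, ∀ n : ℕ, 0 < f (x + n) ↔ 0 < f x := by
    intro x hx n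
    induction n with
    | zero => simp
    | succ n ih => rw [Nat.cast_succ, ← add_assoc, hsign _ (by positivity), ih]
  intro x hx
  by_contra! hfx
  have hx2 : f (x + 2) ≤ 0 := by
    simpa using (hsign_nat x (by linarith) 2).not.2 hfx.not_gt
  set m : ℕ := ⌊x⌋₊ + 1
  have hm : 0 < f m := by
    simpa [m, add_comm] using (hsign_nat 1 one_pos ⌊x⌋₊).2 h1
  have hxm : x < m := by simpa [m] using Nat.lt_floor_add_one x
  have hmx : (m : ℝ) ≤ x + 2 := by
    have := Nat.floor_le (hM.trans hx.le); push_cast [m]; linarith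
  have hseg : (m : ℝ) ∈ segment ℝ x (x + 2) := by
    rw [segment_eq_Icc (by linarith)]; exact ⟨hxm.le, hmx⟩
  have := hconv.le_on_segment hx (show M < x + 2 by linarith) hseg
  linarith [max_le hfx hx2]

lemma eq_add_two_mul_of_mul_add_one_eq_one {g : ℝ → ℝ}
    (hg : ∀ x > M, g x * g (x + 1) = 1) : ∀ x > M, ∀ n : ℕ, g (x + 2 * n) = g x := by
  have hg_periodic : ∀ x > M, g (x + 2) = g x := fun x hx => by
    have h1 := hg x hx
    have h2 := hg (x + 1) (by linarith)
    rw [add_assoc, one_add_one_eq_two] at h2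
    have : g (x + 1) ≠ 0 := by rintro h0; simp [h0] at h1
    exact mul_left_cancel₀ this (by linarith)
  intro x hx n
  induction n with
  | zero => simp
  | succ n ih =>
    have hn : M < x + 2 * n := by linarith [n.cast_nonneg (α := ℝ)]
    rw [Nat.cast_succ, mul_add_one, ← add_assoc, hg_periodic _ hn, ih]

lemma eq_of_convexOn_of_mul_add_one_eq (hconv : ConvexOn ℝ (Ioi M) f) (hf : ∀ x > M, 0 < f x)
    (hh : ∀ x > M, 0 < h x) {c : ℝ} (hc : 0 < c) (hlim : Tendsto h atTop (𝓝 c))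
    (hmul : ∀ x > M, f x * f (x + 1) = h x * h (x + 1)) : ∀ x > M, f x = h x := by
  set g := fun x => f x / h x with hg
  have hg_mul : ∀ x > M, g x * g (x + 1) = 1 := fun x hx => by
    have := hh x hx; have := hh (x + 1) (by linarith)
    rw [hg, div_mul_div_comm, hmul x hx, div_self (by positivity)]
  have hg_nat := eq_add_two_mul_of_mul_add_one_eq_one hg_mul
  have hlimit : ∀ x > M, Tendsto (fun n : ℕ => f (x + 2 * n)) atTop (𝓝 (g x * c)) := by
    intro x hx
    have hto : Tendsto (fun n : ℕ => x + 2 * (n : ℝ)) atTop atTop :=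
      tendsto_atTop_add_const_left _ x
        (tendsto_natCast_atTop_atTop.const_mul_atTop two_pos)
    refine ((hlim.comp hto).const_mul (g x)).congr fun n => ?_
    have : M < x + 2 * n := by linarith [n.cast_nonneg (α := ℝ)]
    rw [Function.comp_apply, ← hg_nat x hx n, hg, div_mul_cancel₀ _ (hh _ this).ne']
  intro x hx
  have hle : g (x + 1) ≤ g x :=
    le_of_mul_le_mul_right (hconv.le_of_tendsto_add_two_mul hx (hlimit x hx)
      (hlimit (x + 1) (by linarith))) hc
  have hge : g x ≤ g (x + 1) := by
    refine le_of_mul_le_mul_right (hconv.le_of_tendsto_add_two_mul (by linarith : M < x + 1)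
      (hlimit (x + 1) (by linarith)) ?_) hc
    have hg2 : g (x + 2) = g x := by simpa using hg_nat x hx 1
    rw [← hg2, add_assoc x 1 1, one_add_one_eq_two]
    exact hlimit (x + 2) (by linarith)
  have hgx : g x * g x = 1 := by
    have := hg_mul x hx
    rwa [le_antisymm hle hge] at this
  have := div_pos (hf x hx) (hh x hx)
  have hg1 : g x = 1 := (mul_self_eq_one_iff.1 hgx).resolve_right (by linarith)
  exact (div_eq_one_iff_eq (hh x hx).ne').1 hg1

lemma forall_pos_of_forall_gt_of_imp_add_one {P : ℝ → Prop} (hM : ∀ x > M, P x)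
    (hstep : ∀ x > 0, P (x + 1) → P x) : ∀ x > 0, P x := by
  suffices ∀ n : ℕ, ∀ x > 0, M < x + n → P x by
    intro x hx
    obtain ⟨n, hn⟩ := exists_nat_gt (M - x)
    exact this n x hx (by linarith)
  intro n
  induction n with
  | zero => intro x _ hx; exact hM x (by simpa using hx)
  | succ n ih =>
    intro x hx hxn
    exact hstep x hx (ih (x + 1) (by linarith) (by push_cast at hxn; linarith))

end Uniqueness

theorem stmt12_general (q k : ℝ) (hq0 : 0 < q) (hq1 : q < 1)
    (f : ℝ → ℝ)
    (hfe : ∀ x > 0, 1 / f (x + 1) = qBracket q x ^ k * f x)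
    (hf1 : f 1 = 1)
    (M : ℝ) (hM : 0 ≤ M) (hconv : ConvexOn ℝ (Ioi M) f) :
    ∀ x > 0, f x = qG q x ^ k := by
  have hb : ∀ x > 0, 0 < qBracket q x ^ k := fun x hx =>
    rpow_pos_of_pos (qBracket_pos hq0 hq1 hx) k
  have hf_succ : ∀ x > 0, f (x + 1) = (qBracket q x ^ k * f x)⁻¹ := fun x hx => by
    rw [← hfe x hx, one_div, inv_inv]
  have hG_succ : ∀ x > 0, qG q (x + 1) ^ k = (qBracket q x ^ k * qG q x ^ k)⁻¹ :=
    fun x hx => qG_rpow_add_one hq0 hq1 k hx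
  have hf_pos : ∀ x > M, 0 < f x := pos_of_convexOn_of_pos_add_one_iff hM hconv
    (fun x hx => by rw [hf_succ x hx, inv_pos, mul_pos_iff_of_pos_left (hb x hx)])
    (by rw [hf1]; exact one_pos)
  have hG_pos : ∀ x > M, 0 < qG q x ^ k := fun x hx =>
    rpow_pos_of_pos (qG_pos hq0 hq1 (by linarith)) k
  have hmul : ∀ x > M, f x * f (x + 1) = qG q x ^ k * qG q (x + 1) ^ k := fun x hx => by
    have := hf_pos x hx; have := hG_pos x hx
    rw [hf_succ x (by linarith), hG_succ x (by linarith)]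
    field_simp
  have hsqrt : 0 < √(1 - q) := sqrt_pos.2 (sub_pos.2 hq1)
  have hlim := (tendsto_qG_atTop hq0 hq1).rpow_const (p := k) (Or.inl hsqrt.ne')
  have hlarge := eq_of_convexOn_of_mul_add_one_eq hconv hf_pos hG_pos (rpow_pos_of_pos hsqrt k)
    hlim hmul
  refine forall_pos_of_forall_gt_of_imp_add_one hlarge fun x hx hx1 => ?_
  have h := hf_succ x hx
  rw [hx1, hG_succ x hx, inv_inj] at h
  exact mul_left_cancel₀ (hb x hx).ne' h.symm

theorem stmt12 (q k : ℝ) (hq0 : 0 < q) (hq1 : q < 1) (hk : 0 < k)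
    (f : ℝ → ℝ)
    (hfe : ∀ x > 0, 1 / f (x + 1) = qBracket q x ^ k * f x)
    (hf1 : f 1 = 1)
    (M : ℝ) (hM : 0 ≤ M) (hconv : ConvexOn ℝ (Ioi M) f) :
    ∀ x > 0, f x = qG q x ^ k :=
  stmt12_general q k hq0 hq1 f hfe hf1 M hM hconv
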